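/- The s-dimensional Halton sequence in bases b₁,…,b_s is uniformly distributed modulo 1 if and only if b₁,…,b_s are pairwise coprime. -/

import Mathlib

/-!
The first `b ^ k` values of `vdc b` are the grid points `t / b ^ k` in some order, and
`vdc b n` exceeds `vdc b (n % b ^ k)` by less than `b⁻ᵏ`. So whether the `n`-th Halton point lies
in a box is squeezed between two conditions on the residues `n % bᵢ ^ k`. For pairwise coprime
bases these residues are independent (Chinese remainder theorem), so the squeezing sets have
densities that are products of one-dimensional grid counts, and both products tend to the volume
of the box as `k → ∞`. Conversely, if `i ≠ j`, the box `[0, 1/bᵢ) × [0, 1/bⱼ)` (times `[0, 1)` in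
the other coordinates) contains exactly the points with `lcm bᵢ bⱼ ∣ n`, of density
`1 / lcm bᵢ bⱼ`, which equals the volume `1 / (bᵢ bⱼ)` only when `gcd bᵢ bⱼ = 1`.
-/

open scoped Classical
open Filter

/-- The b-adic radical inverse (van der Corput) function. -/
noncomputable def vdc (b n : ℕ) : ℝ :=
  ∑ j ∈ Finset.range (n + 1), ((n / b ^ j % b : ℕ) : ℝ) / (b : ℝ) ^ (j + 1)

open Finset Function Topology

-- The count uses the classical decidability of `p`, so `HasDensity` needs no instance argument.
def HasDensity (p : ℕ → Prop) (d : ℝ) : Prop :=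
  Tendsto (fun N : ℕ => (Nat.count p N : ℝ) / N) atTop (𝓝 d)

theorem HasDensity.unique {p : ℕ → Prop} {d d' : ℝ} (h : HasDensity p d)
    (h' : HasDensity p d') : d = d' :=
  tendsto_nhds_unique h h'

theorem HasDensity.of_squeeze {α : Type*} {l : Filter α} [l.NeBot] {p : ℕ → Prop}
    {lo hi : α → ℕ → Prop} {dlo dhi : α → ℝ} {d : ℝ}
    (hlo : ∀ k, HasDensity (lo k) (dlo k)) (hhi : ∀ k, HasDensity (hi k) (dhi k))
    (hlo_le : ∀ k n, lo k n → p n) (hle_hi : ∀ k n, p n → hi k n)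
    (hdlo : Tendsto dlo l (𝓝 d)) (hdhi : Tendsto dhi l (𝓝 d)) : HasDensity p d := by
  refine tendsto_order.2 ⟨fun e he => ?_, fun e he => ?_⟩
  · obtain ⟨k, hk⟩ := (hdlo.eventually (lt_mem_nhds he)).exists
    filter_upwards [(hlo k).eventually (lt_mem_nhds hk)] with N hN
    refine hN.trans_le (div_le_div_of_nonneg_right ?_ N.cast_nonneg)
    exact_mod_cast Nat.count_mono_left fun n _ => hlo_le k n
  · obtain ⟨k, hk⟩ := (hdhi.eventually (gt_mem_nhds he)).exists
    filter_upwards [(hhi k).eventually (gt_mem_nhds hk)] with N hN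
    refine lt_of_le_of_lt (div_le_div_of_nonneg_right ?_ N.cast_nonneg) hN
    exact_mod_cast Nat.count_mono_left fun n _ => hle_hi k n

section Density

variable {p : ℕ → Prop} [DecidablePred p]

theorem hasDensity_iff_tendsto_count {d : ℝ} :
    HasDensity p d ↔ Tendsto (fun N : ℕ => (Nat.count p N : ℝ) / N) atTop (𝓝 d) := by
  rw [HasDensity]
  congr!

theorem hasDensity_iff_tendsto_card {d : ℝ} :
    HasDensity p d ↔ Tendsto (fun N : ℕ => (#((range N).filter p) : ℝ) / N) atTop (𝓝 d) := by
  simp only [hasDensity_iff_tendsto_count, Nat.count_eq_card_filter_range]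

theorem Nat.count_mul_of_periodic {M : ℕ} (hp : Periodic p M) (q : ℕ) :
    Nat.count p (M * q) = q * Nat.count p M := by
  induction q with
  | zero => simp
  | succ q ih =>
    have hshift : (fun k => p (M * q + k)) = p := funext fun k => by
      rw [add_comm, mul_comm]; exact hp.nat_mul q k
    rw [mul_add_one, Nat.count_add, ih, add_one_mul]
    simp only [hshift]

theorem abs_count_sub_le_of_periodic {M : ℕ} (hM : 0 < M) (hp : Periodic p M) (N : ℕ) :
    |(Nat.count p N : ℝ) - N / M * Nat.count p M| ≤ Nat.count p M := by
  have hq : ((N / M : ℕ) : ℝ) = ⌊(N : ℝ) / M⌋₊ := congrArg _ (Nat.floor_div_eq_div N M).symm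
  have hq_le : ((N / M : ℕ) : ℝ) ≤ N / M := hq ▸ Nat.floor_le (by positivity)
  have hq_gt : (N : ℝ) / M < (N / M : ℕ) + 1 := hq ▸ Nat.lt_floor_add_one _
  have hlo : ((N / M : ℕ) : ℝ) * Nat.count p M ≤ Nat.count p N := by
    have := Nat.count_monotone p (Nat.mul_div_le N M)
    rw [Nat.count_mul_of_periodic hp] at this
    exact_mod_cast this
  have hhi : (Nat.count p N : ℝ) ≤ ((N / M : ℕ) + 1) * Nat.count p M := by
    have := Nat.count_monotone p (Nat.lt_mul_div_succ N hM).le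
    rw [Nat.count_mul_of_periodic hp] at this
    exact_mod_cast this
  have hc : (0 : ℝ) ≤ Nat.count p M := Nat.cast_nonneg _
  rw [abs_le]
  constructor <;> nlinarith

theorem hasDensity_of_periodic {M : ℕ} (hM : 0 < M) (hp : Periodic p M) :
    HasDensity p (Nat.count p M / M) := by
  have hbound : ∀ᶠ N : ℕ in atTop,
      |(Nat.count p N : ℝ) / N - Nat.count p M / M| ≤ Nat.count p M / N := by
    filter_upwards [eventually_gt_atTop 0] with N hN
    have hN' : (0 : ℝ) < N := by exact_mod_cast hN
    rw [show (Nat.count p N : ℝ) / N - Nat.count p M / M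
        = ((Nat.count p N : ℝ) - N / M * Nat.count p M) / N by field_simp,
      abs_div, abs_of_pos hN']
    gcongr
    exact abs_count_sub_le_of_periodic hM hp N
  rw [hasDensity_iff_tendsto_count, tendsto_iff_norm_sub_tendsto_zero]
  exact squeeze_zero' (Eventually.of_forall fun _ => norm_nonneg _) hbound
    (tendsto_const_div_atTop_nhds_zero_nat _)

end Density

theorem hasDensity_dvd {M : ℕ} (hM : 0 < M) : HasDensity (M ∣ ·) (M : ℝ)⁻¹ := by
  have hcount : Nat.count (M ∣ ·) M = 1 := by
    rw [Nat.count_eq_card_filter_range, card_eq_one]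
    refine ⟨0, eq_singleton_iff_unique_mem.2 ⟨by simp [hM], fun t ht => ?_⟩⟩
    obtain ⟨htM, hdvd⟩ := mem_filter.1 ht
    exact Nat.eq_zero_of_dvd_of_lt hdvd (mem_range.1 htM)
  simpa [hcount] using hasDensity_of_periodic hM fun n => propext Nat.dvd_add_self_right

section ChineseRemainder

variable {ι : Type*} [Fintype ι] {M : ι → ℕ}

theorem injOn_mod_range_prod (hM : Pairwise (Nat.Coprime on M)) :
    Set.InjOn (fun n i => n % M i) (range (∏ i, M i)) := by
  intro n hn m hm h
  have hdvd : ((∏ i, M i : ℕ) : ℤ) ∣ m - n := by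
    push_cast
    refine Fintype.prod_dvd_of_coprime (fun i j hij => ?_) fun i => ?_
    · exact Nat.isCoprime_iff_coprime.2 (hM hij)
    · exact Nat.modEq_iff_dvd.1 (congrFun h i)
  exact (Nat.modEq_iff_dvd.2 hdvd).eq_of_lt_of_lt (mem_range.1 hn) (mem_range.1 hm)

theorem image_mod_range_prod (hM : Pairwise (Nat.Coprime on M)) :
    (range (∏ i, M i)).image (fun n i => n % M i) = Fintype.piFinset fun i => range (M i) := by
  refine eq_of_subset_of_card_le (fun f hf => ?_) ?_
  · obtain ⟨n, hn, rfl⟩ := mem_image.1 hf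
    have hprod : ∏ i, M i ≠ 0 := by rw [mem_range] at hn; omega
    simp only [Fintype.mem_piFinset, mem_range]
    exact fun i => Nat.mod_lt _ (Nat.pos_of_ne_zero ((prod_ne_zero_iff.1 hprod) i (mem_univ i)))
  · rw [card_image_of_injOn (injOn_mod_range_prod hM), Fintype.card_piFinset]
    simp

theorem Nat.count_forall_mod_prod (hM : Pairwise (Nat.Coprime on M)) (q : ι → ℕ → Prop)
    [∀ i, DecidablePred (q i)] :
    Nat.count (fun n => ∀ i, q i (n % M i)) (∏ i, M i) = ∏ i, Nat.count (q i) (M i) := by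
  simp only [Nat.count_eq_card_filter_range]
  rw [← Finset.card_image_of_injOn ((injOn_mod_range_prod hM).mono (filter_subset _ _)),
    ← filter_image (p := fun f : ι → ℕ => ∀ i, q i (f i)), image_mod_range_prod hM,
    ← Fintype.card_piFinset]
  congr 1
  ext f
  simp only [mem_filter, Fintype.mem_piFinset]
  exact forall_and.symm

theorem hasDensity_forall_mod (hM0 : ∀ i, 0 < M i) (hM : Pairwise (Nat.Coprime on M))
    (q : ι → ℕ → Prop) [∀ i, DecidablePred (q i)] :
    HasDensity (fun n => ∀ i, q i (n % M i)) (∏ i, (Nat.count (q i) (M i) : ℝ) / M i) := by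
  have hperiodic : Periodic (fun n => ∀ i, q i (n % M i)) (∏ i, M i) := fun n => by
    refine propext (forall_congr' fun i => ?_)
    obtain ⟨k, hk⟩ := dvd_prod_of_mem M (mem_univ i)
    rw [hk, Nat.add_mul_mod_self_left]
  have h := hasDensity_of_periodic (prod_pos fun i _ => hM0 i) hperiodic
  rwa [Nat.count_forall_mod_prod hM, Nat.cast_prod, Nat.cast_prod, ← prod_div_distrib] at h

end ChineseRemainder

section VanDerCorput

variable {b : ℕ}

theorem vdc_nonneg (b n : ℕ) : 0 ≤ vdc b n :=
  sum_nonneg fun _ _ => by positivity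

@[simp] theorem vdc_zero (b : ℕ) : vdc b 0 = 0 := by
  simp [vdc]

theorem vdc_eq_sum_range (hb : 1 < b) {n m : ℕ} (hnm : n < m) :
    vdc b n = ∑ j ∈ range m, ((n / b ^ j % b : ℕ) : ℝ) / (b : ℝ) ^ (j + 1) := by
  refine sum_subset (range_subset_range.2 hnm) fun j _ hj => ?_
  have hlt : n < b ^ j :=
    (Nat.lt_pow_self hb).trans_le (Nat.pow_le_pow_right (by omega) (by simp at hj; omega))
  simp [Nat.div_eq_of_lt hlt]

theorem vdc_eq_mod_add_vdc_div (hb : 1 < b) (n : ℕ) :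
    vdc b n = ((n % b : ℕ) + vdc b (n / b)) / b := by
  rw [vdc_eq_sum_range hb (show n < n + 2 by omega), sum_range_succ',
    vdc_eq_sum_range hb (show n / b < n + 1 from Nat.lt_succ_of_le (Nat.div_le_self n b)),
    add_div, sum_div, add_comm]
  congr 1
  · simp
  · refine sum_congr rfl fun j _ => ?_
    rw [Nat.div_div_eq_div_mul, ← pow_succ', div_div, ← pow_succ]

theorem vdc_lt_one (hb : 1 < b) (n : ℕ) : vdc b n < 1 := by
  induction n using Nat.strong_induction_on with
  | _ n ih =>
    rcases Nat.eq_zero_or_pos n with rfl | hn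
    · simp
    have hdigit : ((n % b : ℕ) : ℝ) + 1 ≤ b := by exact_mod_cast Nat.mod_lt n (by omega)
    have hb' : (0 : ℝ) < b := by positivity
    rw [vdc_eq_mod_add_vdc_div hb, div_lt_one hb']
    linarith [ih (n / b) (Nat.div_lt_self hn hb)]

theorem floor_mul_vdc (hb : 1 < b) (n : ℕ) : ⌊b * vdc b n⌋₊ = n % b := by
  have hb' : (0 : ℝ) < b := by positivity
  rw [vdc_eq_mod_add_vdc_div hb, mul_div_cancel₀ _ hb'.ne',
    Nat.floor_eq_iff (by have := vdc_nonneg b (n / b); positivity)]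
  exact ⟨le_add_of_nonneg_right (vdc_nonneg _ _), by linarith [vdc_lt_one hb (n / b)]⟩

theorem vdc_lt_inv_iff_dvd (hb : 1 < b) (n : ℕ) : vdc b n < (b : ℝ)⁻¹ ↔ b ∣ n := by
  have hb' : (0 : ℝ) < b := by positivity
  rw [Nat.dvd_iff_mod_eq_zero, ← floor_mul_vdc hb, Nat.floor_eq_zero, ← lt_inv_mul_iff₀ hb',
    mul_one]

theorem vdc_injective (hb : 1 < b) : Injective (vdc b) := by
  intro n m h
  induction hnm : n + m using Nat.strong_induction_on generalizing n m with
  | _ s ih =>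
    have hmod : n % b = m % b := by rw [← floor_mul_vdc hb, h, floor_mul_vdc hb]
    have hdiv : vdc b (n / b) = vdc b (m / b) := by
      have hb' : (b : ℝ) ≠ 0 := by positivity
      rwa [vdc_eq_mod_add_vdc_div hb n, vdc_eq_mod_add_vdc_div hb m, hmod, div_left_inj' hb',
        add_right_inj] at h
    rcases Nat.eq_zero_or_pos s with hs | hs
    · omega
    have hlt : n / b + m / b < s := by
      have := Nat.div_le_self n b
      have := Nat.div_le_self m b
      rcases Nat.eq_zero_or_pos n with hn | hn
      · have := Nat.div_lt_self (show 0 < m by omega) hb; omega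
      · have := Nat.div_lt_self hn hb; omega
    rw [← Nat.div_add_mod n b, ← Nat.div_add_mod m b, ih _ hlt hdiv rfl, hmod]

theorem vdc_mod_pow_add_vdc_div_pow (hb : 1 < b) (k n : ℕ) :
    vdc b n = vdc b (n % b ^ k) + vdc b (n / b ^ k) / (b : ℝ) ^ k := by
  induction k generalizing n with
  | zero => simp [Nat.mod_one]
  | succ k ih =>
    have hb' : (b : ℝ) ≠ 0 := by positivity
    rw [vdc_eq_mod_add_vdc_div hb n, ih (n / b), vdc_eq_mod_add_vdc_div hb (n % b ^ (k + 1)),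
      pow_succ', Nat.mod_mul_right_mod, Nat.mod_mul_right_div_self, Nat.div_div_eq_div_mul]
    field_simp
    ring

theorem vdc_mem_Ico_vdc_mod_pow (hb : 1 < b) (k n : ℕ) :
    vdc b n ∈ Set.Ico (vdc b (n % b ^ k)) (vdc b (n % b ^ k) + ((b : ℝ) ^ k)⁻¹) := by
  have hbk : (0 : ℝ) < (b : ℝ) ^ k := by positivity
  rw [vdc_mod_pow_add_vdc_div_pow hb k n, Set.mem_Ico]
  refine ⟨le_add_of_nonneg_right (by have := vdc_nonneg b (n / b ^ k); positivity), ?_⟩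
  rw [add_lt_add_iff_left, div_lt_iff₀ hbk, inv_mul_cancel₀ hbk.ne']
  exact vdc_lt_one hb _

theorem exists_vdc_mul_pow_eq (hb : 1 < b) {k m : ℕ} (hm : m < b ^ k) :
    ∃ t < b ^ k, vdc b m * (b : ℝ) ^ k = t := by
  induction k generalizing m with
  | zero => exact ⟨0, by simp, by simp [Nat.lt_one_iff.1 (by simpa using hm)]⟩
  | succ k ih =>
    obtain ⟨t, ht, hvt⟩ := ih (Nat.div_lt_of_lt_mul (by rwa [← pow_succ']))
    have hdigit : m % b + 1 ≤ b := Nat.mod_lt m (by omega)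
    refine ⟨m % b * b ^ k + t, ?_, ?_⟩
    · calc m % b * b ^ k + t < (m % b + 1) * b ^ k := by linarith
        _ ≤ b ^ (k + 1) := by rw [pow_succ']; exact Nat.mul_le_mul_right _ hdigit
    · have hb' : (b : ℝ) ≠ 0 := by positivity
      rw [vdc_eq_mod_add_vdc_div hb, pow_succ', ← mul_assoc, div_mul_cancel₀ _ hb', add_mul,
        hvt]
      push_cast
      ring

theorem image_vdc_range_pow (hb : 1 < b) (k : ℕ) :
    (range (b ^ k)).image (vdc b) = (range (b ^ k)).image fun t : ℕ => (t : ℝ) / (b : ℝ) ^ k := by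
  refine eq_of_subset_of_card_le (fun x hx => ?_) ?_
  · obtain ⟨m, hm, rfl⟩ := mem_image.1 hx
    obtain ⟨t, ht, hvt⟩ := exists_vdc_mul_pow_eq hb (mem_range.1 hm)
    exact mem_image.2 ⟨t, mem_range.2 ht, by rw [← hvt, mul_div_cancel_right₀ _ (by positivity)]⟩
  · rw [card_image_of_injective _ (vdc_injective hb)]
    exact card_image_le

theorem count_vdc_pow (hb : 1 < b) (q : ℝ → Prop) [DecidablePred q] (k : ℕ) :
    Nat.count (fun m => q (vdc b m)) (b ^ k) =
      Nat.count (fun t => q (t / (b : ℝ) ^ k)) (b ^ k) := by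
  have hgrid : Injective fun t : ℕ => (t : ℝ) / (b : ℝ) ^ k := fun s t h =>
    Nat.cast_injective ((div_left_inj' (by positivity)).1 h)
  simp only [Nat.count_eq_card_filter_range]
  calc #{m ∈ range (b ^ k) | q (vdc b m)}
      = #(((range (b ^ k)).image (vdc b)).filter q) := by
        rw [filter_image, card_image_of_injective _ (vdc_injective hb)]
    _ = #(((range (b ^ k)).image fun t : ℕ => (t : ℝ) / (b : ℝ) ^ k).filter q) := by
        rw [image_vdc_range_pow hb]
    _ = #((range (b ^ k)).filter fun t : ℕ => q ((t : ℝ) / (b : ℝ) ^ k)) := by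
        rw [filter_image, card_image_of_injective _ hgrid]

end VanDerCorput

theorem abs_count_div_mem_Ico_sub_le {M : ℕ} (hM : 0 < M) {x y : ℝ} (hx : 0 ≤ x) (hxy : x ≤ y)
    (hy : y ≤ 1) :
    |(Nat.count (fun t => (t : ℝ) / M ∈ Set.Ico x y) M : ℝ) - (y - x) * M| ≤ 1 := by
  have hM' : (0 : ℝ) < M := by exact_mod_cast hM
  have hfilter : (range M).filter (fun t : ℕ => (t : ℝ) / M ∈ Set.Ico x y)
      = Ico ⌈x * M⌉₊ ⌈y * M⌉₊ := by
    ext t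
    simp only [mem_filter, mem_range, Set.mem_Ico, Finset.mem_Ico, Nat.ceil_le, Nat.lt_ceil,
      le_div_iff₀ hM', div_lt_iff₀ hM']
    refine ⟨fun h => h.2, fun h => ⟨?_, h⟩⟩
    exact_mod_cast h.2.trans_le (by nlinarith : y * M ≤ M)
  rw [Nat.count_eq_card_filter_range, hfilter, Nat.card_Ico,
    Nat.cast_sub (Nat.ceil_mono (by nlinarith))]
  have := Nat.le_ceil (x * M)
  have := Nat.le_ceil (y * M)
  have := Nat.ceil_lt_add_one (by positivity : 0 ≤ x * M)
  have := Nat.ceil_lt_add_one (by nlinarith : 0 ≤ y * M)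
  rw [abs_le]
  constructor <;> linarith

theorem tendsto_count_div_mem_Ico {α : Type*} {l : Filter α} {M : α → ℕ}
    (hM : Tendsto (fun k => (M k : ℝ)) l atTop) {x y : α → ℝ} {x₀ y₀ : ℝ}
    (hx : ∀ k, 0 ≤ x k) (hxy : ∀ k, x k ≤ y k) (hy : ∀ k, y k ≤ 1)
    (hx₀ : Tendsto x l (𝓝 x₀)) (hy₀ : Tendsto y l (𝓝 y₀)) :
    Tendsto (fun k => (Nat.count (fun t => (t : ℝ) / M k ∈ Set.Ico (x k) (y k)) (M k) : ℝ) / M k)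
      l (𝓝 (y₀ - x₀)) := by
  have herror : Tendsto (fun k => (Nat.count (fun t => (t : ℝ) / M k ∈ Set.Ico (x k) (y k)) (M k)
      : ℝ) / M k - (y k - x k)) l (𝓝 0) := by
    refine squeeze_zero_norm' ?_ hM.inv_tendsto_atTop
    filter_upwards [hM.eventually_gt_atTop 0] with k hk
    have hk' : 0 < M k := by exact_mod_cast hk
    rw [Real.norm_eq_abs,
      show (Nat.count _ (M k) : ℝ) / M k - (y k - x k)
        = ((Nat.count _ (M k) : ℝ) - (y k - x k) * M k) / M k by field_simp,
      abs_div, abs_of_pos hk, inv_eq_one_div]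
    exact div_le_div_of_nonneg_right (abs_count_div_mem_Ico_sub_le hk' (hx k) (hxy k) (hy k))
      hk.le
  simpa using (hy₀.sub hx₀).add herror

section Halton

variable {ι : Type*} [Fintype ι] {b : ι → ℕ}

theorem hasDensity_forall_vdc_mod_pow_mem_Ico (hb : ∀ i, 1 < b i)
    (hcop : Pairwise (Nat.Coprime on b)) (k : ℕ) (x y : ι → ℝ) :
    HasDensity (fun n => ∀ i, vdc (b i) (n % b i ^ k) ∈ Set.Ico (x i) (y i))
      (∏ i, (Nat.count (fun t => (t : ℝ) / (b i ^ k : ℕ) ∈ Set.Ico (x i) (y i)) (b i ^ k) : ℝ)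
        / (b i ^ k : ℕ)) := by
  have hcount : ∀ i, Nat.count (fun m => vdc (b i) m ∈ Set.Ico (x i) (y i)) (b i ^ k)
      = Nat.count (fun t => (t : ℝ) / (b i ^ k : ℕ) ∈ Set.Ico (x i) (y i)) (b i ^ k) :=
    fun i => by rw [count_vdc_pow (hb i) (· ∈ Set.Ico (x i) (y i)), Nat.cast_pow]
  have h := hasDensity_forall_mod (M := fun i => b i ^ k)
    (fun i => pow_pos (by linarith [hb i]) k) (fun i j hij => (hcop hij).pow k k)
    (fun i m => vdc (b i) m ∈ Set.Ico (x i) (y i))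
  simpa only [hcount] using h

theorem hasDensity_halton_mem_box (hb : ∀ i, 1 < b i) (hcop : Pairwise (Nat.Coprime on b))
    {a c : ι → ℝ} (ha : ∀ i, 0 ≤ a i) (hac : ∀ i, a i ≤ c i) (hc : ∀ i, c i ≤ 1) :
    HasDensity (fun n => ∀ i, vdc (b i) n ∈ Set.Ico (a i) (c i)) (∏ i, (c i - a i)) := by
  set δ : ι → ℕ → ℝ := fun i k => ((b i : ℝ) ^ k)⁻¹
  have hδ : ∀ i, Tendsto (δ i) atTop (𝓝 0) := fun i =>
    tendsto_inv_atTop_zero.comp (tendsto_pow_atTop_atTop_of_one_lt (by exact_mod_cast hb i))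
  have hδ_nonneg : ∀ i k, 0 ≤ δ i k := fun i k => by positivity
  have hpow : ∀ i, Tendsto (fun k => ((b i ^ k : ℕ) : ℝ)) atTop atTop := fun i => by
    simpa only [Nat.cast_pow] using tendsto_pow_atTop_atTop_of_one_lt (by exact_mod_cast hb i)
  -- The `max`es keep the inner and outer approximating intervals inside `[0, 1]` and nonempty.
  refine HasDensity.of_squeeze (l := atTop)
    (lo := fun k n => ∀ i, vdc (b i) (n % b i ^ k) ∈ Set.Ico (a i) (max (a i) (c i - δ i k)))
    (hi := fun k n => ∀ i, vdc (b i) (n % b i ^ k) ∈ Set.Ico (max 0 (a i - δ i k)) (c i))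
    (fun k => hasDensity_forall_vdc_mod_pow_mem_Ico hb hcop k _ _)
    (fun k => hasDensity_forall_vdc_mod_pow_mem_Ico hb hcop k _ _)
    (fun k n hn i => ?_) (fun k n hn i => ?_)
    (tendsto_finsetProd _ fun i _ => ?_) (tendsto_finsetProd _ fun i _ => ?_)
  · obtain ⟨hlo, hhi⟩ := hn i
    obtain ⟨hmod_le, hlt_mod⟩ := vdc_mem_Ico_vdc_mod_pow (hb i) k n
    have : vdc (b i) (n % b i ^ k) < c i - δ i k := (lt_max_iff.1 hhi).resolve_left hlo.not_gt
    exact ⟨hlo.trans hmod_le, by linarith⟩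
  · obtain ⟨hlo, hhi⟩ := hn i
    obtain ⟨hmod_le, hlt_mod⟩ := vdc_mem_Ico_vdc_mod_pow (hb i) k n
    exact ⟨max_le (vdc_nonneg _ _) (by linarith), hmod_le.trans_lt hhi⟩
  · have := tendsto_count_div_mem_Ico (hpow i) (fun _ => ha i) (fun _ => le_max_left _ _)
      (fun k => max_le ((hac i).trans (hc i)) (by linarith [hc i, hδ_nonneg i k]))
      tendsto_const_nhds (tendsto_const_nhds.max ((tendsto_const_nhds (x := c i)).sub (hδ i)))
    simpa [hac i] using this
  · have := tendsto_count_div_mem_Ico (hpow i) (fun k => le_max_left _ _)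
      (fun k => max_le ((ha i).trans (hac i)) (by linarith [hac i, hδ_nonneg i k])) (fun _ => hc i)
      (tendsto_const_nhds.max ((tendsto_const_nhds (x := a i)).sub (hδ i))) tendsto_const_nhds
    simpa [ha i] using this

theorem pairwise_coprime_of_hasDensity_halton_mem_box (hb : ∀ i, 1 < b i)
    (h : ∀ a c : ι → ℝ, (∀ i, 0 ≤ a i ∧ a i < c i ∧ c i ≤ 1) →
      HasDensity (fun n => ∀ i, vdc (b i) n ∈ Set.Ico (a i) (c i)) (∏ i, (c i - a i))) :
    Pairwise (Nat.Coprime on b) := by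
  intro i j hij
  have hpos : ∀ l, 0 < b l := fun l => zero_lt_one.trans (hb l)
  have hb' : ∀ l, (0 : ℝ) < b l := fun l => by exact_mod_cast hpos l
  set c : ι → ℝ := fun l => if l = i ∨ l = j then ((b l : ℝ))⁻¹ else 1 with hc
  have hbox : ∀ l, 0 ≤ (0 : ι → ℝ) l ∧ (0 : ι → ℝ) l < c l ∧ c l ≤ 1 := fun l => by
    have : ((b l : ℝ))⁻¹ ≤ 1 := inv_le_one_of_one_le₀ (by exact_mod_cast (hb l).le)
    simp only [Pi.zero_apply, le_refl, true_and, hc]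
    split_ifs <;> simp [hb' l, this]
  have hvol : ∏ l, (c l - (0 : ι → ℝ) l) = ((b i * b j : ℕ) : ℝ)⁻¹ := by
    simp only [Pi.zero_apply, sub_zero, hc]
    rw [prod_eq_mul i j hij (fun l _ hl => if_neg (by tauto)) (by simp) (by simp),
      if_pos (by simp), if_pos (by simp), Nat.cast_mul, mul_inv]
  have hmem : ∀ n, (∀ l, vdc (b l) n ∈ Set.Ico ((0 : ι → ℝ) l) (c l)) ↔
      Nat.lcm (b i) (b j) ∣ n := by
    intro n
    simp only [Pi.zero_apply, Set.mem_Ico, vdc_nonneg, true_and, Nat.lcm_dvd_iff, hc]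
    refine ⟨fun hn => ⟨?_, ?_⟩, fun hn l => ?_⟩
    · simpa [vdc_lt_inv_iff_dvd (hb i)] using hn i
    · simpa [vdc_lt_inv_iff_dvd (hb j)] using hn j
    · split_ifs with hl
      · rcases hl with rfl | rfl
        exacts [(vdc_lt_inv_iff_dvd (hb l) n).2 hn.1, (vdc_lt_inv_iff_dvd (hb l) n).2 hn.2]
      · exact vdc_lt_one (hb l) n
  have hlcm := hasDensity_dvd (Nat.lcm_pos (hpos i) (hpos j))
  have hprod := (funext fun n => propext (hmem n)) ▸ hvol ▸ h 0 c hbox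
  have hlcm_eq : Nat.lcm (b i) (b j) = b i * b j := by
    exact_mod_cast inv_injective (hlcm.unique hprod)
  exact ((Nat.lcm_eq_mul_iff.1 hlcm_eq).resolve_left (hpos i).ne').resolve_left (hpos j).ne'

end Halton

theorem halton_ud_iff_pairwise_coprime_general (s : ℕ) (b : Fin s → ℕ)
    (hb : ∀ i, 2 ≤ b i) :
    (∀ a c : Fin s → ℝ, (∀ i, 0 ≤ a i ∧ a i < c i ∧ c i ≤ 1) →
        Tendsto (fun N : ℕ =>
            (((Finset.range N).filter
              (fun n => ∀ i, vdc (b i) n ∈ Set.Ico (a i) (c i))).card : ℝ) / N)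
          atTop (nhds (∏ i, (c i - a i))))
      ↔ ∀ i j, i ≠ j → Nat.Coprime (b i) (b j) := by
  refine ⟨fun h => pairwise_coprime_of_hasDensity_halton_mem_box hb fun a c hac =>
    hasDensity_iff_tendsto_card.2 (h a c hac), fun hcop a c hac => ?_⟩
  exact hasDensity_iff_tendsto_card.1 <| hasDensity_halton_mem_box hb hcop (fun i => (hac i).1)
    (fun i => (hac i).2.1.le) (fun i => (hac i).2.2)

/-- The Halton sequence in bases `b₁, …, b_s` is uniformly distributed modulo 1 if and
only if the bases are pairwise coprime. -/
theorem halton_ud_iff_pairwise_coprime (s : ℕ) (hs : 1 ≤ s) (b : Fin s → ℕ)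
    (hb : ∀ i, 2 ≤ b i) :
    (∀ a c : Fin s → ℝ, (∀ i, 0 ≤ a i ∧ a i < c i ∧ c i ≤ 1) →
        Tendsto (fun N : ℕ =>
            (((Finset.range N).filter
              (fun n => ∀ i, vdc (b i) n ∈ Set.Ico (a i) (c i))).card : ℝ) / N)
          atTop (nhds (∏ i, (c i - a i))))
      ↔ ∀ i j, i ≠ j → Nat.Coprime (b i) (b j) :=
  halton_ud_iff_pairwise_coprime_general s b hb
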